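/- Let e : [0,∞) → ℝ^N and K̃ : [0,∞) → ℝ^{m×N} be differentiable functions satisfying ė(t) = (A_m + B L*) e(t) + B K̃(t) x(t) and the adaptive law K̃'(t) = −W⁻¹ Bᵀ P e(t) x(t)ᵀ, where P, Q ∈ ℝ^{N×N} are symmetric positive definite with (A_m + B L*)ᵀ P + P (A_m + B L*) = −Q and W ∈ ℝ^{m×m} is symmetric positive definite. Then the function V(t) = ½ e(t)ᵀ P e(t) + ½ tr(K̃(t)ᵀ W K̃(t)) is differentiable with derivative V'(t) = −½ e(t)ᵀ Q e(t) for all t ≥ 0. -/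

import Mathlib

open Matrix Filter Set MeasureTheory

noncomputable section

attribute [local instance] Matrix.frobeniusNormedAddCommGroup Matrix.frobeniusNormedSpace

/-! `V` is the sum of the quadratic form `eᵀPe` and the weighted trace form `tr(K̃ᵀWK̃)`, so the
product rule gives `V' = ½(ėᵀPe + eᵀPė) + ½(tr(K̃'ᵀWK̃) + tr(K̃ᵀWK̃'))`. Substituting the error
dynamics, the Lyapunov equation turns the `e`-terms into `-eᵀQe`, leaving the cross term
`(BK̃x)ᵀPe`; the adaptive law makes both trace terms equal to minus that cross term, using the
symmetry of `P` and `W`. -/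

section Derivatives

variable {𝕜 : Type*} [NontriviallyNormedField 𝕜] {t : 𝕜}

theorem HasDerivAt.piLp_ofLp {p : ENNReal} [Fact (1 ≤ p)] {ι : Type*} [Fintype ι]
    {E : ι → Type*} [∀ i, NormedAddCommGroup (E i)] [∀ i, NormedSpace 𝕜 (E i)]
    {f : 𝕜 → PiLp p E} {f' : PiLp p E} (hf : HasDerivAt f f' t) :
    HasDerivAt (fun τ => WithLp.ofLp (f τ)) (WithLp.ofLp f') t :=
  (PiLp.hasFDerivAt_ofLp p (f t)).comp_hasDerivAt t hf

variable [CompleteSpace 𝕜]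

theorem HasDerivAt.dotProduct_mulVec_self {n : Type*} [Fintype n] [DecidableEq n]
    (M : Matrix n n 𝕜) {f : 𝕜 → n → 𝕜} {f' : n → 𝕜} (hf : HasDerivAt f f' t) :
    HasDerivAt (fun τ => f τ ⬝ᵥ M *ᵥ f τ) (f t ⬝ᵥ M *ᵥ f' + f' ⬝ᵥ M *ᵥ f t) t := by
  simpa only [LinearMap.toContinuousBilinearMap_apply, toLinearMap₂'_apply'] using
    (toLinearMap₂' 𝕜 M).toContinuousBilinearMap.hasDerivAt_of_bilinear (fun _ => hf) fun _ => hf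

variable {m n : Type*} [Fintype m] [Fintype n]

variable (𝕜) in
def Matrix.weightedTraceForm (W : Matrix m m 𝕜) : Matrix m n 𝕜 →ₗ[𝕜] Matrix m n 𝕜 →ₗ[𝕜] 𝕜 :=
  LinearMap.mk₂ 𝕜 (fun A C => (Aᵀ * W * C).trace)
    (fun A A' C => by simp only [transpose_add, Matrix.add_mul, trace_add])
    (fun c A C => by simp only [transpose_smul, Matrix.smul_mul, trace_smul])
    (fun A C C' => by simp only [Matrix.mul_add, trace_add])
    (fun c A C => by simp only [Matrix.mul_smul, trace_smul])

theorem HasDerivAt.trace_transpose_mul_mul_self (W : Matrix m m 𝕜)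
    {K : 𝕜 → Matrix m n 𝕜} {K' : Matrix m n 𝕜} (hK : HasDerivAt K K' t) :
    HasDerivAt (fun τ => ((K τ)ᵀ * W * K τ).trace)
      (((K t)ᵀ * W * K').trace + (K'ᵀ * W * K t).trace) t :=
  (weightedTraceForm 𝕜 W).toContinuousBilinearMap.hasDerivAt_of_bilinear (fun _ => hK) fun _ => hK

end Derivatives

section Algebra

variable {R : Type*} [CommRing R] {m n : Type*} [Fintype m] [Fintype n]

theorem Matrix.IsSymm.dotProduct_mulVec_comm {P : Matrix n n R} (hP : P.IsSymm) (u v : n → R) :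
    u ⬝ᵥ P *ᵥ v = v ⬝ᵥ P *ᵥ u := by
  rw [dotProduct_mulVec, ← mulVec_transpose, hP.eq, dotProduct_comm]

theorem Matrix.IsSymm.trace_transpose_mul_mul_comm {W : Matrix m m R} (hW : W.IsSymm)
    (A C : Matrix m n R) : (Aᵀ * W * C).trace = (Cᵀ * W * A).trace := by
  rw [← trace_transpose, transpose_mul, transpose_mul, transpose_transpose, hW.eq,
    Matrix.mul_assoc]

theorem dotProduct_transpose_mul_add_mul_mulVec (A P : Matrix n n R) (v : n → R) :
    v ⬝ᵥ (Aᵀ * P + P * A) *ᵥ v = A *ᵥ v ⬝ᵥ P *ᵥ v + v ⬝ᵥ P *ᵥ (A *ᵥ v) := by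
  rw [add_mulVec, dotProduct_add, ← mulVec_mulVec, ← mulVec_mulVec, dotProduct_mulVec v Aᵀ,
    vecMul_transpose, dotProduct_comm v]

theorem Matrix.IsSymm.dotProduct_mulVec_add_add_dotProduct_mulVec {P : Matrix n n R} (hP : P.IsSymm)
    (A : Matrix n n R) (v u : n → R) :
    v ⬝ᵥ P *ᵥ (A *ᵥ v + u) + (A *ᵥ v + u) ⬝ᵥ P *ᵥ v
      = v ⬝ᵥ (Aᵀ * P + P * A) *ᵥ v + 2 * (u ⬝ᵥ P *ᵥ v) := by
  rw [dotProduct_transpose_mul_add_mul_mulVec, mulVec_add, dotProduct_add, add_dotProduct,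
    hP.dotProduct_mulVec_comm v u]
  ring

variable [DecidableEq m]

theorem trace_transpose_mul_mul_nonsing_inv_mul_vecMulVec {W : Matrix m m R}
    (hW : IsUnit W.det) (B : Matrix n m R) (P : Matrix n n R) (K : Matrix m n R) (v x : n → R) :
    (Kᵀ * W * (W⁻¹ * Bᵀ * P * vecMulVec v x)).trace = (B * K) *ᵥ x ⬝ᵥ P *ᵥ v := by
  have hcancel : Kᵀ * W * (W⁻¹ * Bᵀ * P * vecMulVec v x) = (B * K)ᵀ * P * vecMulVec v x := by
    simp only [transpose_mul, Matrix.mul_assoc, mul_nonsing_inv_cancel_left _ _ hW]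
  rw [hcancel, mul_vecMulVec, trace_vecMulVec, dotProduct_comm, ← mulVec_mulVec,
    dotProduct_mulVec, vecMul_transpose]

theorem Matrix.IsSymm.trace_adaptive_law {W : Matrix m m R} (hWs : W.IsSymm)
    (hW : IsUnit W.det) (B : Matrix n m R) (P : Matrix n n R) (K : Matrix m n R) (v x : n → R) :
    (Kᵀ * W * -(W⁻¹ * Bᵀ * P * vecMulVec v x)).trace
      + ((-(W⁻¹ * Bᵀ * P * vecMulVec v x))ᵀ * W * K).trace = -(2 * ((B * K) *ᵥ x ⬝ᵥ P *ᵥ v)) := by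
  rw [hWs.trace_transpose_mul_mul_comm _ K, Matrix.mul_neg, trace_neg,
    trace_transpose_mul_mul_nonsing_inv_mul_vecMulVec hW]
  ring

end Algebra

theorem lyapunov_derivative_adaptive_general {N m : ℕ}
    (Am : Matrix (Fin N) (Fin N) ℝ) (B : Matrix (Fin N) (Fin m) ℝ)
    (Lstar : Matrix (Fin m) (Fin N) ℝ)
    (P Q : Matrix (Fin N) (Fin N) ℝ) (W : Matrix (Fin m) (Fin m) ℝ)
    (hP : P.PosDef) (hW : W.PosDef)
    (hLyap : (Am + B * Lstar)ᵀ * P + P * (Am + B * Lstar) = -Q)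
    (x : ℝ → EuclideanSpace ℝ (Fin N))
    (e : ℝ → EuclideanSpace ℝ (Fin N))
    (Ktilde : ℝ → Matrix (Fin m) (Fin N) ℝ)
    (he : ∀ t : ℝ, 0 ≤ t → HasDerivAt e
      (WithLp.toLp 2 ((Am + B * Lstar).mulVec (e t) + (B * Ktilde t).mulVec (x t))) t)
    (hK : ∀ t : ℝ, 0 ≤ t → HasDerivAt Ktilde
      (-(W⁻¹ * Bᵀ * P * vecMulVec (e t) (x t))) t) :
    ∀ t : ℝ, 0 ≤ t → HasDerivAt
      (fun τ : ℝ => (1 / 2) * (e τ ⬝ᵥ P.mulVec (e τ)) +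
        (1 / 2) * ((Ktilde τ)ᵀ * W * Ktilde τ).trace)
      (-(1 / 2) * (e t ⬝ᵥ Q.mulVec (e t))) t := by
  intro t ht
  have hPs : P.IsSymm := isHermitian_iff_isSymm.mp hP.isHermitian
  have hWs : W.IsSymm := isHermitian_iff_isSymm.mp hW.isHermitian
  have hV := (((he t ht).piLp_ofLp.dotProduct_mulVec_self P).const_mul (1 / 2)).add
    (((hK t ht).trace_transpose_mul_mul_self W).const_mul (1 / 2))
  refine hV.congr_deriv ?_
  rw [WithLp.ofLp_toLp, hPs.dotProduct_mulVec_add_add_dotProduct_mulVec,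
    hWs.trace_adaptive_law ((isUnit_iff_isUnit_det W).mp hW.isUnit), hLyap, neg_mulVec,
    dotProduct_neg]
  ring

/-- along the error dynamics `ė = (A_m + B L*) e + B K̃ x` and the adaptive
law `K̃' = -W⁻¹ Bᵀ P e xᵀ`, where `(A_m + B L*)ᵀ P + P (A_m + B L*) = -Q`, the Lyapunov
function `V = ½ eᵀ P e + ½ tr(K̃ᵀ W K̃)` is differentiable with `V' = -½ eᵀ Q e`. -/
theorem lyapunov_derivative_adaptive {N m : ℕ}
    (Am : Matrix (Fin N) (Fin N) ℝ) (B : Matrix (Fin N) (Fin m) ℝ)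
    (Lstar : Matrix (Fin m) (Fin N) ℝ)
    (P Q : Matrix (Fin N) (Fin N) ℝ) (W : Matrix (Fin m) (Fin m) ℝ)
    (hP : P.PosDef) (hQ : Q.PosDef) (hW : W.PosDef)
    (hLyap : (Am + B * Lstar)ᵀ * P + P * (Am + B * Lstar) = -Q)
    (x : ℝ → EuclideanSpace ℝ (Fin N))
    (e : ℝ → EuclideanSpace ℝ (Fin N))
    (Ktilde : ℝ → Matrix (Fin m) (Fin N) ℝ)
    (he : ∀ t : ℝ, 0 ≤ t → HasDerivAt e
      (WithLp.toLp 2 ((Am + B * Lstar).mulVec (e t) + (B * Ktilde t).mulVec (x t))) t)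
    (hK : ∀ t : ℝ, 0 ≤ t → HasDerivAt Ktilde
      (-(W⁻¹ * Bᵀ * P * vecMulVec (e t) (x t))) t) :
    ∀ t : ℝ, 0 ≤ t → HasDerivAt
      (fun τ : ℝ => (1 / 2) * (e τ ⬝ᵥ P.mulVec (e τ)) +
        (1 / 2) * ((Ktilde τ)ᵀ * W * Ktilde τ).trace)
      (-(1 / 2) * (e t ⬝ᵥ Q.mulVec (e t))) t :=
  lyapunov_derivative_adaptive_general Am B Lstar P Q W hP hW hLyap x e Ktilde he hK

end
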